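/- arXiv:1908.08155 — 6 statements merged into one kernel-verified Lean document; each statement's English description precedes it below -/
import Mathlib

section
/- Define the relative number of subuniverses of a finite nearlattice L with n elements as σ(L) = |Sub(L)| · 2^{8−n}, where Sub(L) is the set of subsets of L closed under the join operation and under the partial meet operation (where defined). If K is a subnearlattice of L (a nonempty subset closed under join and under the partial meet of L) viewed as a nearlattice with the restricted operations, and every subuniverse of the restriction of L's structure to K is a subuniverse of K's structure, then σ(K) ≥ σ(L). -/
/-!
A subuniverse `X` of `L` is determined by its trace `X ∩ K` and by its part outside `K`.
The trace is a subuniverse of `L` contained in `K`, hence by hypothesis a subuniverse of `K`,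
while the outside part is an arbitrary subset of `L \ K`. Thus
`|Sub L| ≤ |Sub K| · 2 ^ (|L| - |K|)`, which is `σ(K) ≥ σ(L)`.
-/

section Nearlattice

variable {α : Type*} [SemilatticeSup α]

def IsNearlatticeSubuniverse (X : Set α) : Prop :=
  (∀ x ∈ X, ∀ y ∈ X, x ⊔ y ∈ X) ∧ (∀ x ∈ X, ∀ y ∈ X, ∀ z : α, IsGLB {x, y} z → z ∈ X)

theorem IsNearlatticeSubuniverse.inter {X Y : Set α} (hX : IsNearlatticeSubuniverse X)
    (hY : IsNearlatticeSubuniverse Y) : IsNearlatticeSubuniverse (X ∩ Y) :=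
  ⟨fun x hx y hy => ⟨hX.1 x hx.1 y hy.1, hY.1 x hx.2 y hy.2⟩,
    fun x hx y hy z hz => ⟨hX.2 x hx.1 y hy.1 z hz, hY.2 x hx.2 y hy.2 z hz⟩⟩

end Nearlattice

theorem Set.natCard_subtype_le_of_inter_mem {α : Type*} [Finite α] (K : Set α)
    (p q : Set α → Prop) (hpq : ∀ X, p X → q (X ∩ K)) :
    Nat.card {X // p X} ≤ Nat.card {Y // q Y} * 2 ^ Kᶜ.ncard := by
  classical
  have : Fintype α := Fintype.ofFinite α
  let f : {X // p X} → {Y // q Y} × Set (Kᶜ : Set α) :=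
    fun X => (⟨X.1 ∩ K, hpq X.1 X.2⟩, Subtype.val ⁻¹' X.1)
  have hf : Function.Injective f := by
    rintro ⟨X, _⟩ ⟨Y, _⟩ hXY
    simp only [f, Prod.mk.injEq, Subtype.mk.injEq] at hXY
    obtain ⟨hin, hout⟩ := hXY
    have hout' : X ∩ Kᶜ = Y ∩ Kᶜ := by
      have := congrArg (Set.image Subtype.val) hout
      rwa [Subtype.image_preimage_coe, Subtype.image_preimage_coe, Set.inter_comm,
        Set.inter_comm Kᶜ] at this
    rw [Subtype.mk.injEq, ← Set.inter_union_compl X K, ← Set.inter_union_compl Y K, hin, hout']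
  calc Nat.card {X // p X} ≤ Nat.card ({Y // q Y} × Set (Kᶜ : Set α)) :=
        Nat.card_le_card_of_injective f hf
    _ = Nat.card {Y // q Y} * 2 ^ Kᶜ.ncard := by
        rw [Nat.card_prod, Nat.card_eq_fintype_card (α := Set _), Fintype.card_set,
          ← Nat.card_eq_fintype_card, Nat.card_coe_set_eq]

theorem mul_two_zpow_sub_le_mul_two_zpow_sub {a b : ℝ} {k c n : ℕ} (m : ℤ) (hn : k + c = n)
    (h : a ≤ b * 2 ^ c) : a * 2 ^ (m - n) ≤ b * 2 ^ (m - k) := by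
  have hsplit : (2 : ℝ) ^ (m - k) = 2 ^ c * 2 ^ (m - n) := by
    rw [← zpow_natCast, ← zpow_add₀ two_ne_zero, ← hn]
    push_cast
    ring_nf
  rw [hsplit, ← mul_assoc]
  exact mul_le_mul_of_nonneg_right h (by positivity)

theorem stmt8_general {α : Type*} [SemilatticeSup α] [Fintype α] (K : Set α)
    (hsup : ∀ x ∈ K, ∀ y ∈ K, x ⊔ y ∈ K)
    (hinf : ∀ x ∈ K, ∀ y ∈ K, ∀ z : α, IsGLB {x, y} z → z ∈ K)
    (hcomp : ∀ X : Set α, X ⊆ K →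
      ((∀ x ∈ X, ∀ y ∈ X, x ⊔ y ∈ X) ∧
       (∀ x ∈ X, ∀ y ∈ X, ∀ z : α, IsGLB {x, y} z → z ∈ X)) →
      (∀ x ∈ X, ∀ y ∈ X, ∀ z ∈ K,
        (z ≤ x ∧ z ≤ y ∧ ∀ w ∈ K, w ≤ x → w ≤ y → w ≤ z) → z ∈ X)) :
    (Nat.card {X : Set α // X ⊆ K ∧ (∀ x ∈ X, ∀ y ∈ X, x ⊔ y ∈ X) ∧
        (∀ x ∈ X, ∀ y ∈ X, ∀ z ∈ K,
          (z ≤ x ∧ z ≤ y ∧ ∀ w ∈ K, w ≤ x → w ≤ y → w ≤ z) → z ∈ X)} : ℝ)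
      * (2 : ℝ) ^ ((8 : ℤ) - (K.ncard : ℤ)) ≥
    (Nat.card {X : Set α // (∀ x ∈ X, ∀ y ∈ X, x ⊔ y ∈ X) ∧
        (∀ x ∈ X, ∀ y ∈ X, ∀ z : α, IsGLB {x, y} z → z ∈ X)} : ℝ)
      * (2 : ℝ) ^ ((8 : ℤ) - (Fintype.card α : ℤ)) := by
  have hK : IsNearlatticeSubuniverse K := ⟨hsup, hinf⟩
  have hsize : K.ncard + Kᶜ.ncard = Fintype.card α := by
    rw [Set.ncard_add_ncard_compl, Nat.card_eq_fintype_card]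
  refine mul_two_zpow_sub_le_mul_two_zpow_sub 8 hsize ?_
  norm_cast
  exact Set.natCard_subtype_le_of_inter_mem K IsNearlatticeSubuniverse _
    fun X hX => ⟨Set.inter_subset_right, (hX.inter hK).1,
      hcomp _ Set.inter_subset_right (hX.inter hK)⟩

/-- If `K` is a subnearlattice of a finite nearlattice `L` such that every
subuniverse of the restriction of `L`'s structure to `K` is a subuniverse of `K`'s
own nearlattice structure, then the relative number of subuniverses of `K` is at
least that of `L`, where `σ(L) = |Sub L| · 2 ^ (8 - |L|)`. -/
theorem stmt8 {α : Type*} [SemilatticeSup α] [Fintype α] (K : Set α)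
    (hK : K.Nonempty)
    (hsup : ∀ x ∈ K, ∀ y ∈ K, x ⊔ y ∈ K)
    (hinf : ∀ x ∈ K, ∀ y ∈ K, ∀ z : α, IsGLB {x, y} z → z ∈ K)
    (hcomp : ∀ X : Set α, X ⊆ K →
      ((∀ x ∈ X, ∀ y ∈ X, x ⊔ y ∈ X) ∧
       (∀ x ∈ X, ∀ y ∈ X, ∀ z : α, IsGLB {x, y} z → z ∈ X)) →
      (∀ x ∈ X, ∀ y ∈ X, ∀ z ∈ K,
        (z ≤ x ∧ z ≤ y ∧ ∀ w ∈ K, w ≤ x → w ≤ y → w ≤ z) → z ∈ X)) :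
    (Nat.card {X : Set α // X ⊆ K ∧ (∀ x ∈ X, ∀ y ∈ X, x ⊔ y ∈ X) ∧
        (∀ x ∈ X, ∀ y ∈ X, ∀ z ∈ K,
          (z ≤ x ∧ z ≤ y ∧ ∀ w ∈ K, w ≤ x → w ≤ y → w ≤ z) → z ∈ X)} : ℝ)
      * (2 : ℝ) ^ ((8 : ℤ) - (K.ncard : ℤ)) ≥
    (Nat.card {X : Set α // (∀ x ∈ X, ∀ y ∈ X, x ⊔ y ∈ X) ∧
        (∀ x ∈ X, ∀ y ∈ X, ∀ z : α, IsGLB {x, y} z → z ∈ X)} : ℝ)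
      * (2 : ℝ) ^ ((8 : ℤ) - (Fintype.card α : ℤ)) :=
  stmt8_general K hsup hinf hcomp
end

section
/- Let L be a finite nearlattice in which all distinct minimal elements have common join m, let x_min be a minimal element, set M = ↑m and W(x_min) = ↑x_min \ M. Call v ∈ M \ {m} an x_min-entry if v covers some element of W(x_min). Suppose i is a minimal x_min-entry with x_min-anchor c (so c ∈ W(x_min) and c is covered by i). Then for every y ∈ L with m ≤ y < i, one has c ∧ y = c ∧ m (both meets exist since c, y ≥ x_min). -/
/-! Every minimal element lies below `m`, so `x_min` is a lower bound of `{c, y}` and the meet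
`z = c ∧ y` exists; `z ∉ ↑m` since `z ≤ c`. If `z ≰ m`, the interval from `z` to `z ∨ m ≤ y`
starts outside `↑m` and ends inside it, so it crosses into `↑m` along a cover `u ⋖ v` with
`u ≥ z ≥ x_min`, and `v ≠ m` because `z ≰ m`. Then `v` is an `x_min`-entry with
`v ≤ y < i`, against the minimality of `i`. Hence `z ≤ m ≤ y`, and `z` is also `c ∧ m`. -/

theorem exists_covBy_of_not_of_le {α : Type*} [PartialOrder α] [Finite α] {P : α → Prop}
    {a b : α} (hab : a ≤ b) (ha : ¬ P a) (hb : P b) :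
    ∃ u v, a ≤ u ∧ u ⋖ v ∧ v ≤ b ∧ ¬ P u ∧ P v := by
  obtain ⟨u, -, ⟨hau, hub, hu⟩, hmax⟩ :=
    exists_maximal_ge_of_wellFoundedGT (fun x => a ≤ x ∧ x ≤ b ∧ ¬ P x) a ⟨le_rfl, hab, ha⟩
  have hub' : u < b := hub.lt_of_ne fun h => hu (h ▸ hb)
  obtain ⟨v, huv, hvb⟩ := exists_covBy_le_of_lt hub'
  refine ⟨u, v, hau, huv, hvb, hu, by_contra fun hv => ?_⟩
  exact huv.lt.not_ge (hmax ⟨hau.trans huv.le, hvb, hv⟩ huv.le)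

theorem exists_isGLB_of_nonempty_lowerBounds {α : Type*} [SemilatticeSup α] [Finite α]
    {s : Set α} (hs : (lowerBounds s).Nonempty) : ∃ z, IsGLB s z := by
  have := Fintype.ofFinite α
  classical
  have hne : (lowerBounds s).toFinset.Nonempty := Set.toFinset_nonempty.mpr hs
  exact ⟨_, isLUB_lowerBounds.mp (by simpa using Finset.isLUB_sup' hne)⟩

theorem IsGLB.pair_of_le_of_le {α : Type*} [Preorder α] {a b b' z : α}
    (hz : IsGLB {a, b} z) (hzb' : z ≤ b') (hb' : b' ≤ b) : IsGLB {a, b'} z := by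
  have hlb : ∀ {w}, w ∈ lowerBounds {a, b'} → w ∈ lowerBounds {a, b} := by
    simp only [lowerBounds_insert, lowerBounds_singleton, Set.mem_inter_iff, Set.mem_Iic]
    exact fun ⟨hwa, hwb'⟩ => ⟨hwa, hwb'.trans hb'⟩
  refine ⟨?_, fun w hw => hz.2 (hlb hw)⟩
  simp only [lowerBounds_insert, lowerBounds_singleton, Set.mem_inter_iff, Set.mem_Iic]
  exact ⟨hz.1 (Set.mem_insert a {b}), hzb'⟩

theorem IsMin.le_of_forall_sup_eq {α : Type*} [SemilatticeSup α] [Finite α] {m xm : α}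
    (hm : ∀ p q : α, IsMin p → IsMin q → p ≠ q → p ⊔ q = m) (hxm : IsMin xm) : xm ≤ m := by
  obtain ⟨p, hpm, hp⟩ := exists_minimal_le_of_wellFoundedLT (fun _ => True) m trivial
  rw [minimal_true] at hp
  obtain rfl | hne := eq_or_ne p xm
  · exact hpm
  · exact hm xm p hxm hp hne.symm ▸ le_sup_left

theorem stmt15_general {α : Type*} [SemilatticeSup α] [Fintype α] (m : α)
    (hm : ∀ p q : α, IsMin p → IsMin q → p ≠ q → p ⊔ q = m)
    (xm : α) (hxm : IsMin xm) (i c : α)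
    (himin : ∀ v : α, (m ≤ v ∧ v ≠ m ∧ ∃ u, (xm ≤ u ∧ ¬ m ≤ u) ∧ u ⋖ v) → ¬ v < i)
    (hc : xm ≤ c ∧ ¬ m ≤ c) :
    ∀ y : α, m ≤ y → y < i → ∃ z, IsGLB {c, y} z ∧ IsGLB {c, m} z := by
  intro y hmy hyi
  have hxm_le_y : xm ≤ y := (hxm.le_of_forall_sup_eq hm).trans hmy
  have hxm_lb : xm ∈ lowerBounds {c, y} := by simp [hc.1, hxm_le_y]
  obtain ⟨z, hz⟩ := exists_isGLB_of_nonempty_lowerBounds ⟨xm, hxm_lb⟩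
  have hzc : z ≤ c := hz.1 (Set.mem_insert c {y})
  have hzy : z ≤ y := hz.1 (Set.mem_insert_of_mem c rfl)
  have hzm : z ≤ m := by
    by_contra hzm
    obtain ⟨u, v, hzu, huv, hv, hmu, hmv⟩ := exists_covBy_of_not_of_le (P := (m ≤ ·))
      (le_sup_left : z ≤ z ⊔ m) (fun h => hc.2 (h.trans hzc)) le_sup_right
    have hvm : v ≠ m := by
      rintro rfl
      exact hzm (hzu.trans huv.le)
    have hxm_le_u : xm ≤ u := (hz.2 hxm_lb).trans hzu
    exact himin v ⟨hmv, hvm, u, ⟨hxm_le_u, hmu⟩, huv⟩ ((hv.trans (sup_le hzy hmy)).trans_lt hyi)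
  exact ⟨z, hz, hz.pair_of_le_of_le hzm hmy⟩

/-- Let all distinct minimal elements of a finite nearlattice have common join `m`,
let `x_min` be minimal, `i` a minimal `x_min`-entry with `x_min`-anchor `c`.
Then for every `y` with `m ≤ y < i`, the (defined) meets `c ∧ y` and `c ∧ m`
coincide. -/
theorem stmt15 {α : Type*} [SemilatticeSup α] [Fintype α] (m : α)
    (hm : ∀ p q : α, IsMin p → IsMin q → p ≠ q → p ⊔ q = m)
    (xm : α) (hxm : IsMin xm) (i c : α)
    (hi : m ≤ i ∧ i ≠ m ∧ ∃ u, (xm ≤ u ∧ ¬ m ≤ u) ∧ u ⋖ i)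
    (himin : ∀ v : α, (m ≤ v ∧ v ≠ m ∧ ∃ u, (xm ≤ u ∧ ¬ m ≤ u) ∧ u ⋖ v) → ¬ v < i)
    (hc : xm ≤ c ∧ ¬ m ≤ c) (hci : c ⋖ i) :
    ∀ y : α, m ≤ y → y < i → ∃ z, IsGLB {c, y} z ∧ IsGLB {c, m} z :=
  stmt15_general m hm xm hxm i c himin hc
end

section
/- Let L be a finite nearlattice whose minimal elements have pairwise common join m, let x_min be a minimal element, and suppose v ∈ ↑m \ {m} is an x_min-entry with x_min-anchor u (so u ∈ ↑x_min \ ↑m and u ≺ v). Then u ∨ m = v. -/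
theorem CovBy.sup_eq_of_le_of_not_le {α : Type*} [SemilatticeSup α] {a b c : α}
    (hab : a ⋖ b) (hcb : c ≤ b) (hca : ¬ c ≤ a) : a ⊔ c = b :=
  (sup_le hab.le hcb).eq_of_not_lt (hab.2 (left_lt_sup.2 hca))

theorem stmt16_general {α : Type*} [SemilatticeSup α] (m : α)
    (xm : α) (u v : α)
    (hv : m ≤ v ∧ v ≠ m) (hu : xm ≤ u ∧ ¬ m ≤ u) (hcov : u ⋖ v) :
    u ⊔ m = v :=
  hcov.sup_eq_of_le_of_not_le hv.1 hu.2

/-- If all distinct minimal elements of a finite nearlattice have common join `m`,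
`x_min` is minimal, `v` is an `x_min`-entry and `u ∈ W(x_min)` is an
`x_min`-anchor of `v` (so `u ≺ v`), then `u ∨ m = v`. -/
theorem stmt16 {α : Type*} [SemilatticeSup α] [Fintype α] (m : α)
    (hm : ∀ p q : α, IsMin p → IsMin q → p ≠ q → p ⊔ q = m)
    (xm : α) (hxm : IsMin xm) (u v : α)
    (hv : m ≤ v ∧ v ≠ m) (hu : xm ≤ u ∧ ¬ m ≤ u) (hcov : u ⋖ v) :
    u ⊔ m = v :=
  stmt16_general m xm u v hv hu hcov
end

section
/- Let L be a finite nearlattice with exactly two minimal elements a_min and b_min, let m = a_min ∨ b_min, and suppose i is the unique b_min-entry (the unique element of ↑m \ {m} covering some element of the wing W(b_min) = ↑b_min \ ↑m). Then for every u ∈ W(b_min), u ∨ m ∈ {m, i}. -/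
/-! A maximal element `w` of the wing of `b` below `u ⊔ m` is covered by `u ⊔ m`: anything strictly
above `w` and below `u ⊔ m` lies in `↑m`, hence above both `u` and `m`. So for `u ≰ m` the join
`u ⊔ m` is a `b`-entry, and uniqueness forces it to be `i`. -/

theorem exists_le_not_le_covBy_sup {α : Type*} [SemilatticeSup α] [Finite α] {u m : α}
    (hmu : ¬ m ≤ u) : ∃ w, u ≤ w ∧ ¬ m ≤ w ∧ w ⋖ u ⊔ m := by
  have hu_lt : u < u ⊔ m := left_lt_sup.mpr hmu
  obtain ⟨w, huw, hw_max⟩ := (Set.toFinite {x | x < u ⊔ m ∧ ¬ m ≤ x}).exists_le_maximal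
    (a := u) ⟨hu_lt, hmu⟩
  refine ⟨w, huw, hw_max.prop.2, hw_max.prop.1, fun y hwy hy_lt => ?_⟩
  have hmy : m ≤ y := by_contra fun hmy => hw_max.not_gt ⟨hy_lt, hmy⟩ hwy
  exact hy_lt.not_ge (sup_le (huw.trans hwy.le) hmy)

theorem stmt17_general {α : Type*} [SemilatticeSup α] [Fintype α] (b m i : α)
    (huniq : ∀ v : α, (m ≤ v ∧ v ≠ m ∧ ∃ w, (b ≤ w ∧ ¬ m ≤ w) ∧ w ⋖ v) → v = i) :
    ∀ u : α, b ≤ u → ¬ m ≤ u → u ⊔ m = m ∨ u ⊔ m = i := by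
  intro u hbu hmu
  by_cases hum : u ≤ m
  · exact Or.inl (sup_eq_right.mpr hum)
  obtain ⟨w, huw, hmw, hcov⟩ := exists_le_not_le_covBy_sup hmu
  have hjoin_ne : u ⊔ m ≠ m := fun h => hum (h ▸ le_sup_left)
  exact Or.inr (huniq _ ⟨le_sup_right, hjoin_ne, w, ⟨hbu.trans huw, hmw⟩, hcov⟩)

/-- If a finite nearlattice has exactly two minimal elements `a`, `b` with
`m = a ⊔ b`, and `i` is the unique `b`-entry, then `u ∨ m ∈ {m, i}` for every
`u` in the wing of `b`. -/
theorem stmt17 {α : Type*} [SemilatticeSup α] [Fintype α] (a b m i : α)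
    (hab : a ≠ b) (ha : IsMin a) (hb : IsMin b)
    (honly : ∀ x : α, IsMin x → x = a ∨ x = b)
    (hm : a ⊔ b = m)
    (hi : m ≤ i ∧ i ≠ m ∧ ∃ w, (b ≤ w ∧ ¬ m ≤ w) ∧ w ⋖ i)
    (huniq : ∀ v : α, (m ≤ v ∧ v ≠ m ∧ ∃ w, (b ≤ w ∧ ¬ m ≤ w) ∧ w ⋖ v) → v = i) :
    ∀ u : α, b ≤ u → ¬ m ≤ u → u ⊔ m = m ∨ u ⊔ m = i :=
  stmt17_general b m i huniq
end

section
/- Let L be a finite nearlattice with exactly two minimal elements a_min and b_min, m = a_min ∨ b_min, and suppose i is the unique b_min-entry. Then W(b_min) ∪ {m, i} is a subnearlattice of L: it is closed under the join of L and under the partial meet of L (every meet of two of its elements that is defined in L belongs to the set). -/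
/-!
An element `v ≥ m`, `v ≠ m`, covering a wing element is an entry, hence `v = i`. Starting
from a wing element `w ≰ m` below some `z ≥ m`, a maximal wing element of `[w, z]` is covered
inside `[w, z]` by an element that must lie above `m` and is not `m`; so `w ≤ i ≤ z`. Hence
every element of `W(b) ∪ {m, i}` lies below `i`, a join of two of them that reaches `m` is `m`
or is forced up to `i`, and a defined meet that reaches `m` is a meet inside the chain `m ≤ i`.
-/

def wing {α : Type*} [Preorder α] (b m : α) : Set α := Set.Ici b \ Set.Ici m

section PartialOrder

variable {α : Type*} [PartialOrder α] {b m w z : α}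

theorem le_of_mem_wing_union {i : α} (hbm : b ≤ m) (hmi : m ≤ i) (hw : w ∈ wing b m ∪ {m, i}) :
    b ≤ w := by
  rcases hw with hw | rfl | rfl
  exacts [hw.1, hbm, hbm.trans hmi]

theorem exists_covBy_of_mem_wing [Finite α] (hw : w ∈ wing b m) (hwz : w ≤ z) (hmz : m ≤ z) :
    ∃ u ∈ wing b m, ∃ v, w ≤ u ∧ u ⋖ v ∧ m ≤ v ∧ v ≤ z := by
  obtain ⟨u, hwu, hu⟩ :=
    Finite.exists_le_maximal (p := fun u => u ∈ wing b m ∧ u ≤ z) ⟨hw, hwz⟩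
  have huz : u < z := hu.prop.2.lt_of_ne fun h => hu.prop.1.2 (h ▸ hmz)
  obtain ⟨v, huv, hvz⟩ := exists_covBy_le_of_lt huz
  have hmv : m ≤ v := by
    by_contra hmv
    exact huv.lt.not_ge (hu.2 ⟨⟨hu.prop.1.1.trans huv.le, hmv⟩, hvz⟩ huv.le)
  exact ⟨u, hu.prop.1, v, hwu, huv, hmv, hvz⟩

theorem isGLB_mem_wing_union {i x y : α} (hbm : b ≤ m)
    (hmi : m ≤ i) (hx : x ∈ wing b m ∪ {m, i}) (hy : y ∈ wing b m ∪ {m, i})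
    (hz : IsGLB {x, y} z) : z ∈ wing b m ∪ {m, i} := by
  have hzx : z ≤ x := hz.1 (Set.mem_insert _ _)
  have hzy : z ≤ y := hz.1 (Set.mem_insert_of_mem _ rfl)
  by_cases hmz : m ≤ z
  · have hchain : ∀ t ∈ wing b m ∪ {m, i}, z ≤ t → t = m ∨ t = i := by
      rintro t (ht | ht) hzt
      exacts [absurd (hmz.trans hzt) ht.2, ht]
    rcases hchain x hx hzx with rfl | rfl
    · exact .inr (.inl (le_antisymm hzx hmz))
    rcases hchain y hy hzy with rfl | rfl
    · exact .inr (.inl (le_antisymm hzy hmz))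
    · refine .inr (.inr (le_antisymm hzx (hz.2 ?_)))
      rintro t (rfl | rfl) <;> rfl
  · refine .inl ⟨hz.2 ?_, hmz⟩
    rintro t (rfl | rfl)
    exacts [le_of_mem_wing_union hbm hmi hx, le_of_mem_wing_union hbm hmi hy]

section Entry

variable [Finite α] {i : α} (huniq : ∀ v, m ≤ v → v ≠ m → ∀ u ∈ wing b m, u ⋖ v → v = i)
include huniq

theorem mem_Icc_entry_of_mem_wing (hw : w ∈ wing b m) (hwm : ¬ w ≤ m) (hwz : w ≤ z)
    (hmz : m ≤ z) : i ∈ Set.Icc w z := by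
  obtain ⟨u, hu, v, hwu, huv, hmv, hvz⟩ := exists_covBy_of_mem_wing hw hwz hmz
  have hvm : v ≠ m := by
    rintro rfl
    exact hwm (hwu.trans huv.le)
  obtain rfl := huniq v hmv hvm u hu huv
  exact ⟨hwu.trans huv.le, hvz⟩

theorem entry_le_of_mem (hw : w ∈ wing b m ∪ {m, i}) (hwm : ¬ w ≤ m) (hwz : w ≤ z)
    (hmz : m ≤ z) : i ≤ z := by
  rcases hw with hw | rfl | rfl
  · exact (mem_Icc_entry_of_mem_wing huniq hw hwm hwz hmz).2
  · exact absurd le_rfl hwm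
  · exact hwz

end Entry

end PartialOrder

section SemilatticeSup

variable {α : Type*} [SemilatticeSup α] [Finite α] {b m i w : α}
  (hmi : m ≤ i) (huniq : ∀ v, m ≤ v → v ≠ m → ∀ u ∈ wing b m, u ⋖ v → v = i)
include hmi huniq

theorem le_entry_of_mem_wing (hw : w ∈ wing b m) : w ≤ i := by
  by_cases hwm : w ≤ m
  · exact hwm.trans hmi
  · exact (mem_Icc_entry_of_mem_wing huniq hw hwm le_sup_left le_sup_right).1

theorem le_entry_of_mem (hw : w ∈ wing b m ∪ {m, i}) : w ≤ i := by
  rcases hw with hw | rfl | rfl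
  · exact le_entry_of_mem_wing hmi huniq hw
  · exact hmi
  · exact le_rfl

theorem sup_mem_wing_union {x y : α} (hbm : b ≤ m) (hx : x ∈ wing b m ∪ {m, i})
    (hy : y ∈ wing b m ∪ {m, i}) : x ⊔ y ∈ wing b m ∪ {m, i} := by
  by_cases hm : m ≤ x ⊔ y
  · by_cases hxym : x ≤ m ∧ y ≤ m
    · exact .inr (.inl (le_antisymm (sup_le hxym.1 hxym.2) hm))
    refine .inr (.inr (le_antisymm (sup_le (le_entry_of_mem hmi huniq hx)
      (le_entry_of_mem hmi huniq hy)) ?_))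
    rcases not_and_or.1 hxym with hxm | hym
    · exact entry_le_of_mem huniq hx hxm le_sup_left hm
    · exact entry_le_of_mem huniq hy hym le_sup_right hm
  · exact .inl ⟨(le_of_mem_wing_union hbm hmi hx).trans le_sup_left, hm⟩

end SemilatticeSup

theorem stmt18_general {α : Type*} [SemilatticeSup α] [Fintype α] (a b m i : α)
    (hm : a ⊔ b = m)
    (hi : m ≤ i ∧ i ≠ m ∧ ∃ w, (b ≤ w ∧ ¬ m ≤ w) ∧ w ⋖ i)
    (huniq : ∀ v : α, (m ≤ v ∧ v ≠ m ∧ ∃ w, (b ≤ w ∧ ¬ m ≤ w) ∧ w ⋖ v) → v = i) :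
    ((Set.Ici b \ Set.Ici m) ∪ {m, i}).Nonempty ∧
    (∀ x ∈ (Set.Ici b \ Set.Ici m) ∪ {m, i},
      ∀ y ∈ (Set.Ici b \ Set.Ici m) ∪ {m, i},
        x ⊔ y ∈ (Set.Ici b \ Set.Ici m) ∪ {m, i}) ∧
    (∀ x ∈ (Set.Ici b \ Set.Ici m) ∪ {m, i},
      ∀ y ∈ (Set.Ici b \ Set.Ici m) ∪ {m, i},
        ∀ z : α, IsGLB {x, y} z → z ∈ (Set.Ici b \ Set.Ici m) ∪ {m, i}) := by
  have hbm : b ≤ m := hm ▸ le_sup_right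
  have hmi : m ≤ i := hi.1
  have hentry : ∀ v, m ≤ v → v ≠ m → ∀ u ∈ wing b m, u ⋖ v → v = i :=
    fun v hmv hvm u hu huv => huniq v ⟨hmv, hvm, u, hu, huv⟩
  exact ⟨⟨m, .inr (.inl rfl)⟩,
    fun x hx y hy => sup_mem_wing_union hmi hentry hbm hx hy,
    fun x hx y hy z hz => isGLB_mem_wing_union hbm hmi hx hy hz⟩

/-- If a finite nearlattice has exactly two minimal elements `a`, `b` with
`m = a ⊔ b` and `i` is the unique `b`-entry, then `W(b) ∪ {m, i}` is a
subnearlattice: nonempty, closed under joins and under all defined meets. -/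
theorem stmt18 {α : Type*} [SemilatticeSup α] [Fintype α] (a b m i : α)
    (hab : a ≠ b) (ha : IsMin a) (hb : IsMin b)
    (honly : ∀ x : α, IsMin x → x = a ∨ x = b)
    (hm : a ⊔ b = m)
    (hi : m ≤ i ∧ i ≠ m ∧ ∃ w, (b ≤ w ∧ ¬ m ≤ w) ∧ w ⋖ i)
    (huniq : ∀ v : α, (m ≤ v ∧ v ≠ m ∧ ∃ w, (b ≤ w ∧ ¬ m ≤ w) ∧ w ⋖ v) → v = i) :
    ((Set.Ici b \ Set.Ici m) ∪ {m, i}).Nonempty ∧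
    (∀ x ∈ (Set.Ici b \ Set.Ici m) ∪ {m, i},
      ∀ y ∈ (Set.Ici b \ Set.Ici m) ∪ {m, i},
        x ⊔ y ∈ (Set.Ici b \ Set.Ici m) ∪ {m, i}) ∧
    (∀ x ∈ (Set.Ici b \ Set.Ici m) ∪ {m, i},
      ∀ y ∈ (Set.Ici b \ Set.Ici m) ∪ {m, i},
        ∀ z : α, IsGLB {x, y} z → z ∈ (Set.Ici b \ Set.Ici m) ∪ {m, i}) :=
  stmt18_general a b m i hm hi huniq
end

section
/- Let L and K be finite nearlattices on disjoint underlying sets, let 1_K be the top element of K, and let u ∈ L. Define an order on L ∪ (K \ {1_K}) by: x ≤ y iff (x,y ∈ L and x ≤_L y), or (x,y ∈ K \ {1_K} and x ≤_K y), or (x ∈ K \ {1_K}, y ∈ L, and u ≤_L y). Then this relation is a partial order and the resulting poset is a finite join-semilattice (hence a finite nearlattice). -/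
/-!
The glued relation is transitive because a chain from `K \ {1_K}` into `L` only ever requires
`u ≤ y`, which persists as `y` grows in `L`. Joins are computed part-wise: two elements of `L`
keep their `L`-join, an element `a ∈ L` and one of `K \ {1_K}` have join `a ⊔ u`, and two
elements of `K \ {1_K}` keep their `K`-join unless it is the removed top `1_K`, in which case
their least upper bound is `u`, the least element of `↑u`.
-/

/-- The gluing order on `(K \ {1_K}) ⊕ L`: within each part the original order,
and every element of `K \ {1_K}` below every element of `↑u ⊆ L`. -/
def glueLe {L K : Type*} [Preorder L] [Preorder K] [OrderTop K] (u : L) :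
    ({k : K // k ≠ ⊤} ⊕ L) → ({k : K // k ≠ ⊤} ⊕ L) → Prop
  | Sum.inl k, Sum.inl k' => (k : K) ≤ (k' : K)
  | Sum.inr a, Sum.inr b => a ≤ b
  | Sum.inl _, Sum.inr b => u ≤ b
  | Sum.inr _, Sum.inl _ => False

section PartialOrder

variable {L K : Type*} [PartialOrder L] [PartialOrder K] [OrderTop K]

theorem glueLe_isPartialOrder (u : L) : IsPartialOrder ({k : K // k ≠ ⊤} ⊕ L) (glueLe u) where
  refl := by rintro (k | a) <;> exact le_rfl
  trans := by
    rintro (k | a) (k' | b) (k'' | c) hxy hyz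
    exacts [le_trans hxy hyz, hyz, hyz.elim, le_trans hxy hyz, hxy.elim, hxy.elim, hyz.elim,
      le_trans hxy hyz]
  antisymm := by
    rintro (k | a) (k' | b) hxy hyx
    exacts [congrArg Sum.inl (Subtype.ext (le_antisymm hxy hyx)), hyx.elim, hxy.elim,
      congrArg Sum.inr (le_antisymm hxy hyx)]

end PartialOrder

section Sup

variable {L K : Type*} [SemilatticeSup L] [SemilatticeSup K] [OrderTop K]

open Classical in
noncomputable def glueSup (u : L) :
    ({k : K // k ≠ ⊤} ⊕ L) → ({k : K // k ≠ ⊤} ⊕ L) → ({k : K // k ≠ ⊤} ⊕ L)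
  | Sum.inl k, Sum.inl k' => if h : (k : K) ⊔ k' = ⊤ then Sum.inr u else Sum.inl ⟨k ⊔ k', h⟩
  | Sum.inl _, Sum.inr b => Sum.inr (u ⊔ b)
  | Sum.inr a, Sum.inl _ => Sum.inr (a ⊔ u)
  | Sum.inr a, Sum.inr b => Sum.inr (a ⊔ b)

theorem glueLe_glueSup_left (u : L) (x y : {k : K // k ≠ ⊤} ⊕ L) :
    glueLe u x (glueSup u x y) := by
  rcases x with k | a <;> rcases y with k' | b
  · by_cases h : (k : K) ⊔ k' = ⊤
    · simp only [glueSup, h, dite_true, glueLe, le_refl]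
    · simp only [glueSup, h, dite_false, glueLe, le_sup_left]
  exacts [le_sup_left (b := b), le_sup_left (b := u), le_sup_left (b := b)]

theorem glueLe_glueSup_right (u : L) (x y : {k : K // k ≠ ⊤} ⊕ L) :
    glueLe u y (glueSup u x y) := by
  rcases x with k | a <;> rcases y with k' | b
  · by_cases h : (k : K) ⊔ k' = ⊤
    · simp only [glueSup, h, dite_true, glueLe, le_refl]
    · simp only [glueSup, h, dite_false, glueLe, le_sup_right]
  exacts [le_sup_right (a := u), le_sup_right (a := a), le_sup_right (a := a)]

theorem glueSup_glueLe (u : L) {x y t : {k : K // k ≠ ⊤} ⊕ L} (hx : glueLe u x t)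
    (hy : glueLe u y t) : glueLe u (glueSup u x y) t := by
  rcases x with k | a <;> rcases y with k' | b <;> rcases t with j | c
  · have hj : (k : K) ⊔ k' ≤ j := sup_le hx hy
    have h : (k : K) ⊔ k' ≠ ⊤ := ne_top_of_le_ne_top j.2 hj
    simpa only [glueSup, h, dite_false, glueLe] using hj
  · by_cases h : (k : K) ⊔ k' = ⊤
    · simpa only [glueSup, h, dite_true, glueLe] using hx
    · simpa only [glueSup, h, dite_false, glueLe] using hx
  exacts [hy.elim, sup_le hx hy, hx.elim, sup_le hx hy, hx.elim, sup_le hx hy]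

end Sup

theorem stmt19_general {L K : Type*} [SemilatticeSup L]
    [SemilatticeSup K] [OrderTop K] (u : L) :
    IsPartialOrder ({k : K // k ≠ ⊤} ⊕ L) (glueLe u) ∧
    ∀ x y : ({k : K // k ≠ ⊤} ⊕ L), ∃ s,
      glueLe u x s ∧ glueLe u y s ∧
        ∀ t, glueLe u x t → glueLe u y t → glueLe u s t :=
  ⟨glueLe_isPartialOrder u, fun x y ↦
    ⟨glueSup u x y, glueLe_glueSup_left u x y, glueLe_glueSup_right u x y,
      fun _ ↦ glueSup_glueLe u⟩⟩

/-- Gluing a finite nearlattice `K` (minus its top) below the principal filter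
`↑u` of a finite nearlattice `L` yields a partial order that is a finite
join-semilattice (hence a finite nearlattice): every pair has a least upper
bound. -/
theorem stmt19 {L K : Type*} [SemilatticeSup L] [Fintype L]
    [SemilatticeSup K] [Fintype K] [OrderTop K] (u : L) :
    IsPartialOrder ({k : K // k ≠ ⊤} ⊕ L) (glueLe u) ∧
    ∀ x y : ({k : K // k ≠ ⊤} ⊕ L), ∃ s,
      glueLe u x s ∧ glueLe u y s ∧
        ∀ t, glueLe u x t → glueLe u y t → glueLe u s t :=
  stmt19_general u
end
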